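/- arXiv:1403.7721 — 3 statements merged into one kernel-verified Lean document; each statement's English description precedes it below -/
import Mathlib

section
/- Let S be a random subset of a finite set V such that for a fixed element u ∈ V, the collection of events {u' ∈ S} for u' ≠ u is jointly independent of the event {u ∈ S}. Let s be an element of S chosen uniformly at random (undefined when S is empty). Then P[u = s] ≥ P[u ∈ S] / (E[|S|] + 1). -/
open Finset

/-! Write `T = S \ {u}`. On the event `u ∈ S` we have `|S| = |T| + 1`, and since `T` is
independent of that event, `P[u = s] = P[u ∈ S] · E[1 / (|T| + 1)]`. By Jensen's inequality for
`x ↦ 1 / x`, `E[1 / (|T| + 1)] ≥ 1 / (E[|T|] + 1) ≥ 1 / (E[|S|] + 1)`. -/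

lemma one_div_sum_mul_le_sum_div {ι : Type*} (s : Finset ι) (w x : ι → ℝ)
    (hw : ∀ i ∈ s, 0 ≤ w i) (hw₁ : ∑ i ∈ s, w i = 1) (hx : ∀ i ∈ s, 0 < x i) :
    1 / ∑ i ∈ s, w i * x i ≤ ∑ i ∈ s, w i / x i := by
  simpa [zpow_neg_one, div_eq_mul_inv] using
    (convexOn_zpow (𝕜 := ℝ) (-1)).map_sum_le hw hw₁ hx

lemma one_div_sum_mul_add_one_le_sum_div_add_one {ι : Type*} (s : Finset ι) (w x y : ι → ℝ)
    (hw : ∀ i ∈ s, 0 ≤ w i) (hw₁ : ∑ i ∈ s, w i = 1)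
    (hx : ∀ i ∈ s, 0 ≤ x i) (hxy : ∀ i ∈ s, x i ≤ y i) :
    1 / (∑ i ∈ s, w i * y i + 1) ≤ ∑ i ∈ s, w i / (x i + 1) := by
  have hmean : ∑ i ∈ s, w i * (x i + 1) = ∑ i ∈ s, w i * x i + 1 := by
    simp [mul_add, sum_add_distrib, hw₁]
  have hwx : 0 ≤ ∑ i ∈ s, w i * x i := sum_nonneg fun i hi => mul_nonneg (hw i hi) (hx i hi)
  calc 1 / (∑ i ∈ s, w i * y i + 1)
      ≤ 1 / (∑ i ∈ s, w i * x i + 1) := by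
        gcongr with i hi
        · exact hw i hi
        · exact hxy i hi
    _ = 1 / ∑ i ∈ s, w i * (x i + 1) := by rw [hmean]
    _ ≤ ∑ i ∈ s, w i / (x i + 1) :=
        one_div_sum_mul_le_sum_div s w _ hw hw₁ fun i hi => by linarith [hx i hi]

lemma sum_ite_mul_comp_eq_of_indep {Ω β : Type*} [Fintype Ω] [DecidableEq β]
    (p : Ω → ℝ) (E : Ω → Prop) [DecidablePred E] (T : Ω → β)
    (hindep : ∀ b, (∑ ω, if T ω = b ∧ E ω then p ω else 0) =
      (∑ ω, if T ω = b then p ω else 0) * ∑ ω, if E ω then p ω else 0)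
    (g : β → ℝ) :
    (∑ ω, if E ω then p ω * g (T ω) else 0) =
      (∑ ω, if E ω then p ω else 0) * ∑ ω, p ω * g (T ω) := by
  have hfiber (F : Ω → Prop) [DecidablePred F] :
      (∑ ω, if F ω then p ω * g (T ω) else 0) =
        ∑ b ∈ univ.image T, g b * ∑ ω, if T ω = b ∧ F ω then p ω else 0 := by
    rw [← sum_fiberwise_of_maps_to (fun ω _ => mem_image_of_mem T (mem_univ ω))]
    refine sum_congr rfl fun b _ => ?_
    rw [sum_filter, mul_sum]
    refine sum_congr rfl fun ω _ => ?_
    by_cases hT : T ω = b <;> by_cases hF : F ω <;> simp [hT, hF, mul_comm]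
  calc (∑ ω, if E ω then p ω * g (T ω) else 0)
      = ∑ b ∈ univ.image T, g b * ∑ ω, if T ω = b ∧ E ω then p ω else 0 := hfiber E
    _ = (∑ ω, if E ω then p ω else 0) *
          ∑ b ∈ univ.image T, g b * ∑ ω, if T ω = b ∧ True then p ω else 0 := by
      rw [mul_sum]
      refine sum_congr rfl fun b _ => ?_
      simp only [hindep b, and_true]
      ring
    _ = (∑ ω, if E ω then p ω else 0) * ∑ ω, p ω * g (T ω) := by
      rw [← hfiber]; simp

theorem stmt0_general {Ω V : Type*} [Fintype Ω] [DecidableEq V]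
    (p : Ω → ℝ) (hp : ∀ ω, 0 ≤ p ω) (hsum : ∑ ω, p ω = 1)
    (S : Ω → Finset V) (u : V)
    (hindep : ∀ A : Finset V, u ∉ A →
      (∑ ω, if S ω \ {u} = A ∧ u ∈ S ω then p ω else 0) =
      (∑ ω, if S ω \ {u} = A then p ω else 0) * (∑ ω, if u ∈ S ω then p ω else 0)) :
    (∑ ω, if u ∈ S ω then p ω / ((S ω).card : ℝ) else 0) ≥
      (∑ ω, if u ∈ S ω then p ω else 0) / ((∑ ω, p ω * ((S ω).card : ℝ)) + 1) := by
  set q := ∑ ω, if u ∈ S ω then p ω else 0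
  have hindep' (A : Finset V) : (∑ ω, if S ω \ {u} = A ∧ u ∈ S ω then p ω else 0) =
      (∑ ω, if S ω \ {u} = A then p ω else 0) * q := by
    by_cases hA : u ∈ A
    · have hne (ω : Ω) : S ω \ {u} ≠ A := fun h => by simp [← h] at hA
      simp [hne]
    · exact hindep A hA
  have hLHS : (∑ ω, if u ∈ S ω then p ω / ((S ω).card : ℝ) else 0) =
      q * ∑ ω, p ω / (((S ω \ {u}).card : ℝ) + 1) := by
    simp_rw [div_eq_mul_one_div (p _)]
    rw [← sum_ite_mul_comp_eq_of_indep p (u ∈ S ·) (fun ω => S ω \ {u}) hindep'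
      (fun A => 1 / ((A.card : ℝ) + 1))]
    refine sum_congr rfl fun ω _ => ?_
    split_ifs with hu
    · rw [sdiff_singleton_eq_erase, ← card_erase_add_one hu, Nat.cast_succ]
    · rfl
  have hq : 0 ≤ q := sum_nonneg fun ω _ => by split_ifs <;> simp [hp ω]
  rw [ge_iff_le, hLHS, div_eq_mul_one_div]
  gcongr
  exact one_div_sum_mul_add_one_le_sum_div_add_one univ p _ _ (fun ω _ => hp ω) hsum
    (fun _ _ => Nat.cast_nonneg _) fun ω _ => Nat.cast_le.2 (card_le_card sdiff_subset)

/-- Lemma 1 (paper): for a random subset `S` of a finite set `V` (finite sample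
space `Ω` with weights `p`), if the events `{u' ∈ S}` for `u' ≠ u` are jointly
independent of `{u ∈ S}`, and `s` is a uniformly random element of `S`, then
`P[u = s] ≥ P[u ∈ S] / (E[|S|] + 1)`. -/
theorem stmt0 {Ω V : Type*} [Fintype Ω] [Fintype V] [DecidableEq V]
    (p : Ω → ℝ) (hp : ∀ ω, 0 ≤ p ω) (hsum : ∑ ω, p ω = 1)
    (S : Ω → Finset V) (u : V)
    (hindep : ∀ A : Finset V, u ∉ A →
      (∑ ω, if S ω \ {u} = A ∧ u ∈ S ω then p ω else 0) =
      (∑ ω, if S ω \ {u} = A then p ω else 0) * (∑ ω, if u ∈ S ω then p ω else 0)) :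
    (∑ ω, if u ∈ S ω then p ω / ((S ω).card : ℝ) else 0) ≥
      (∑ ω, if u ∈ S ω then p ω else 0) / ((∑ ω, p ω * ((S ω).card : ℝ)) + 1) :=
  stmt0_general p hp hsum S u hindep
end

section
/- Let S be a random subset of a finite set L and T a random subset of a finite set R. Suppose for a fixed pair (l, r) ∈ L × R, the events {l' ∈ S} for l' ≠ l and {r' ∈ T} for r' ≠ r are jointly independent of the event {(l, r) ∈ S × T}. Let s be chosen uniformly from S and t uniformly from T (independently, undefined if either set is empty). Then P[(l, r) = (s, t)] ≥ P[(l, r) ∈ S × T] / ((E[|S|] + 1)(E[|T|] + 1)). -/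
/-!
On the event `l ∈ S ∧ r ∈ T` the weight `1 / (|S| |T|)` is `F (S \ {l}, T \ {r})` with
`F (A, B) = 1 / ((|A| + 1) (|B| + 1))`. The independence hypothesis says the event is independent
of every fibre of `ω ↦ (S \ {l}, T \ {r})`, hence of any function of it, so the left-hand side
is `P[l ∈ S ∧ r ∈ T] · E[F (S \ {l}, T \ {r})]`. Since `(x, y) ↦ 1 / (x y)` is convex on the open
quadrant, Jensen's inequality bounds that expectation below by
`1 / ((E|S \ {l}| + 1)(E|T \ {r}| + 1)) ≥ 1 / ((E|S| + 1)(E|T| + 1))`. Convexity is used only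
through the tangent plane at the mean, where it is the AM-GM inequality for three numbers with
product one.
-/

open Finset

lemma three_le_add_add_of_mul_eq_one {x y z : ℝ} (hx : 0 ≤ x) (hy : 0 ≤ y) (hz : 0 ≤ z)
    (h : x * y * z = 1) : 3 ≤ x + y + z := by
  have amgm := Real.geom_mean_le_arith_mean3_weighted (w₁ := 1 / 3) (w₂ := 1 / 3) (w₃ := 1 / 3)
    (by norm_num) (by norm_num) (by norm_num) hx hy hz (by norm_num)
  rw [← Real.mul_rpow hx hy, ← Real.mul_rpow (mul_nonneg hx hy) hz, h, Real.one_rpow] at amgm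
  linarith

/-- `(u, v) ↦ (u * v)⁻¹` lies above its tangent plane at `(c, d)`. -/
lemma inv_mul_tangent_le_inv_mul {u v c d : ℝ} (hu : 0 < u) (hv : 0 < v) (hc : 0 < c)
    (hd : 0 < d) : (c * d)⁻¹ * (3 - u / c - v / d) ≤ (u * v)⁻¹ := by
  have key : 3 ≤ c * d / (u * v) + u / c + v / d :=
    three_le_add_add_of_mul_eq_one (by positivity) (by positivity) (by positivity)
      (by field_simp)
  calc (c * d)⁻¹ * (3 - u / c - v / d) ≤ (c * d)⁻¹ * (c * d / (u * v)) := by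
        gcongr; linarith
    _ = (u * v)⁻¹ := by field_simp

lemma inv_sum_mul_sum_le_sum_mul_inv {ι : Type*} (s : Finset ι) (p X Y : ι → ℝ)
    (hp : ∀ i ∈ s, 0 ≤ p i) (hp_sum : ∑ i ∈ s, p i = 1) (hX : ∀ i ∈ s, 0 < X i)
    (hY : ∀ i ∈ s, 0 < Y i) :
    ((∑ i ∈ s, p i * X i) * ∑ i ∈ s, p i * Y i)⁻¹ ≤ ∑ i ∈ s, p i * (X i * Y i)⁻¹ := by
  set a := ∑ i ∈ s, p i * X i
  set b := ∑ i ∈ s, p i * Y i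
  obtain ⟨j, hj, hpj⟩ : ∃ j ∈ s, 0 < p j :=
    exists_lt_of_sum_lt (by simp [hp_sum] : ∑ i ∈ s, (0 : ℝ) < ∑ i ∈ s, p i)
  have ha : 0 < a := sum_pos' (fun i hi => mul_nonneg (hp i hi) (hX i hi).le)
    ⟨j, hj, mul_pos hpj (hX j hj)⟩
  have hb : 0 < b := sum_pos' (fun i hi => mul_nonneg (hp i hi) (hY i hi).le)
    ⟨j, hj, mul_pos hpj (hY j hj)⟩
  have hexpand : ∀ i ∈ s, p i * ((a * b)⁻¹ * (3 - X i / a - Y i / b)) =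
      (a * b)⁻¹ * (3 * p i - p i * X i / a - p i * Y i / b) := fun i _ => by ring
  calc (a * b)⁻¹ = ∑ i ∈ s, p i * ((a * b)⁻¹ * (3 - X i / a - Y i / b)) := by
        rw [sum_congr rfl hexpand, ← mul_sum, sum_sub_distrib, sum_sub_distrib, ← mul_sum,
          ← sum_div, ← sum_div, hp_sum, div_self ha.ne', div_self hb.ne']
        ring
    _ ≤ ∑ i ∈ s, p i * (X i * Y i)⁻¹ := sum_le_sum fun i hi =>
        mul_le_mul_of_nonneg_left (inv_mul_tangent_le_inv_mul (hX i hi) (hY i hi) ha hb) (hp i hi)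

lemma inv_mul_sum_add_one_le_sum_mul_inv_of_le {ι : Type*} (s : Finset ι) (p X Y X' Y' : ι → ℝ)
    (hp : ∀ i ∈ s, 0 ≤ p i) (hp_sum : ∑ i ∈ s, p i = 1) (hX : ∀ i ∈ s, 0 ≤ X i)
    (hY : ∀ i ∈ s, 0 ≤ Y i) (hXX' : ∀ i ∈ s, X i ≤ X' i) (hYY' : ∀ i ∈ s, Y i ≤ Y' i) :
    ((∑ i ∈ s, p i * X' i + 1) * (∑ i ∈ s, p i * Y' i + 1))⁻¹ ≤
      ∑ i ∈ s, p i * ((X i + 1) * (Y i + 1))⁻¹ := by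
  have hshift (Z : ι → ℝ) : ∑ i ∈ s, p i * (Z i + 1) = ∑ i ∈ s, p i * Z i + 1 := by
    simp only [mul_add, mul_one, sum_add_distrib, hp_sum]
  have hmean {Z : ι → ℝ} (hZ : ∀ i ∈ s, 0 ≤ Z i) : 0 ≤ ∑ i ∈ s, p i * Z i :=
    sum_nonneg fun i hi => mul_nonneg (hp i hi) (hZ i hi)
  have hEX := hmean hX
  have hEY := hmean hY
  have hEX' := hmean fun i hi => (hX i hi).trans (hXX' i hi)
  calc _ ≤ ((∑ i ∈ s, p i * (X i + 1)) * ∑ i ∈ s, p i * (Y i + 1))⁻¹ := by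
        rw [hshift, hshift]
        gcongr with i hi j hj
        exacts [hp i hi, hXX' i hi, hp j hj, hYY' j hj]
    _ ≤ _ := inv_sum_mul_sum_le_sum_mul_inv s p _ _ hp hp_sum
        (fun i hi => by linarith [hX i hi]) (fun i hi => by linarith [hY i hi])

lemma sum_mul_comp_eq_sum_image {Ω β : Type*} [Fintype Ω] [DecidableEq β] (w : Ω → ℝ)
    (g : Ω → β) (F : β → ℝ) :
    ∑ ω, w ω * F (g ω) = ∑ v ∈ univ.image g, F v * ∑ ω, if g ω = v then w ω else 0 := by
  refine (sum_image' _ fun ω _ => ?_).symm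
  rw [← sum_filter, mul_sum]
  exact sum_congr rfl fun ω' hω' => by rw [(mem_filter.1 hω').2, mul_comm]

lemma sum_ite_mul_comp_eq_mul_of_indep {Ω β : Type*} [Fintype Ω] [DecidableEq β] (p : Ω → ℝ)
    (g : Ω → β) (E : Ω → Prop) [DecidablePred E] (F : β → ℝ)
    (hindep : ∀ ω₀, (∑ ω, if g ω = g ω₀ ∧ E ω then p ω else 0) =
      (∑ ω, if g ω = g ω₀ then p ω else 0) * ∑ ω, if E ω then p ω else 0) :
    (∑ ω, if E ω then p ω * F (g ω) else 0) =
      (∑ ω, if E ω then p ω else 0) * ∑ ω, p ω * F (g ω) := by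
  simp only [← ite_zero_mul]
  rw [sum_mul_comp_eq_sum_image, sum_mul_comp_eq_sum_image, mul_sum]
  refine sum_congr rfl fun v hv => ?_
  obtain ⟨ω₀, -, rfl⟩ := mem_image.1 hv
  simp only [← ite_and]
  rw [hindep ω₀]
  ring

/-- Lemma 2 (paper): for random subsets `S ⊆ L`, `T ⊆ R` with the stated joint
independence, and `s`, `t` uniform samples from `S` and `T`,
`P[(l,r) = (s,t)] ≥ P[(l,r) ∈ S × T] / ((E[|S|]+1)(E[|T|]+1))`. -/
theorem stmt1 {Ω L R : Type*} [Fintype Ω] [Fintype L] [Fintype R]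
    [DecidableEq L] [DecidableEq R]
    (p : Ω → ℝ) (hp : ∀ ω, 0 ≤ p ω) (hsum : ∑ ω, p ω = 1)
    (S : Ω → Finset L) (T : Ω → Finset R) (l : L) (r : R)
    (hindep : ∀ (A : Finset L) (B : Finset R), l ∉ A → r ∉ B →
      (∑ ω, if S ω \ {l} = A ∧ T ω \ {r} = B ∧ l ∈ S ω ∧ r ∈ T ω then p ω else 0) =
      (∑ ω, if S ω \ {l} = A ∧ T ω \ {r} = B then p ω else 0) *
        (∑ ω, if l ∈ S ω ∧ r ∈ T ω then p ω else 0)) :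
    (∑ ω, if l ∈ S ω ∧ r ∈ T ω then
        p ω / (((S ω).card : ℝ) * ((T ω).card : ℝ)) else 0) ≥
      (∑ ω, if l ∈ S ω ∧ r ∈ T ω then p ω else 0) /
        (((∑ ω, p ω * ((S ω).card : ℝ)) + 1) * ((∑ ω, p ω * ((T ω).card : ℝ)) + 1)) := by
  set g : Ω → Finset L × Finset R := fun ω => (S ω \ {l}, T ω \ {r})
  set F : Finset L × Finset R → ℝ := fun AB => (((#AB.1 : ℝ) + 1) * ((#AB.2 : ℝ) + 1))⁻¹
  have hweight : (∑ ω, if l ∈ S ω ∧ r ∈ T ω then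
      p ω / (((S ω).card : ℝ) * ((T ω).card : ℝ)) else 0) =
      ∑ ω, if l ∈ S ω ∧ r ∈ T ω then p ω * F (g ω) else 0 :=
    sum_congr rfl fun ω _ => by
      split_ifs with h
      · simp only [g, F, sdiff_singleton_eq_erase]
        rw [← Nat.cast_add_one, ← Nat.cast_add_one, card_erase_add_one h.1,
          card_erase_add_one h.2, div_eq_mul_inv]
      · rfl
  have hexchange := sum_ite_mul_comp_eq_mul_of_indep p g (fun ω => l ∈ S ω ∧ r ∈ T ω) F
    fun ω₀ => by simpa [g, Prod.ext_iff, and_assoc] using hindep (S ω₀ \ {l}) (T ω₀ \ {r})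
  have hjensen := inv_mul_sum_add_one_le_sum_mul_inv_of_le univ p
    (fun ω => (#(S ω \ {l}) : ℝ)) (fun ω => (#(T ω \ {r}) : ℝ)) (fun ω => (#(S ω) : ℝ))
    (fun ω => (#(T ω) : ℝ)) (fun ω _ => hp ω) hsum (fun _ _ => Nat.cast_nonneg _)
    (fun _ _ => Nat.cast_nonneg _) (fun _ _ => by gcongr; exact sdiff_subset)
    (fun _ _ => by gcongr; exact sdiff_subset)
  rw [ge_iff_le, hweight, hexchange, div_eq_mul_inv]
  exact mul_le_mul_of_nonneg_left hjensen (sum_nonneg fun ω _ => ite_nonneg (hp ω) le_rfl)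
end

section
/- Let G̃ and H̃ be the graphs produced by the randomized hardness reduction with parameters N and α, determined by independent Bernoulli(α) variables X_{uivj} for (u,v) ∈ E_G and i,j ∈ [N]. For any fixed injective map φ : V_G × [N] → V_G × [k] × [N], the function VALUE(φ) = Σ_{((u,i),(v,j)) ∈ E_G̃} 1[(φ(u,i), φ(v,j)) ∈ E_H̃], viewed as a function of the variables X_{uivj}, is (k² + 1)-Lipschitz: flipping any single variable X_{uivj} changes VALUE(φ) by at most k² + 1. -/
/-! Write `VALUE(φ)` as a sum over `p = ((u, v), i, j) ∈ E × [N]²` of a `{0, 1}`-valued term that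
reads `X` at exactly two indices: `p` itself and the index `imageIndex φ p` of the edge of `H̃`
hit by `φ`. Flipping `X c` can only change the terms with `p = c` (at most one) or
`imageIndex φ p = c`; by injectivity of `φ` the latter are told apart by their labels
`imageLabels φ p ∈ [k]²`, so there are at most `k²` of them. -/

open Finset

/-- The value of a fixed injective map `φ` on the instance of the randomized
reduction determined by the Bernoulli configuration `X`. -/
noncomputable def valueQAP {V : Type*} [Fintype V] [DecidableEq V] {k N : ℕ}
    (E : Finset (V × V)) (π : V × V → Finset (Fin k × Fin k))
    (φ : V × Fin N → V × Fin k × Fin N)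
    (X : (V × V) × Fin N × Fin N → Bool) : ℝ :=
  ∑ e ∈ E, ∑ i : Fin N, ∑ j : Fin N,
    (if X ((e.1, e.2), i, j) = true
        ∧ ((φ (e.1, i)).1, (φ (e.2, j)).1) ∈ E
        ∧ X (((φ (e.1, i)).1, (φ (e.2, j)).1), (φ (e.1, i)).2.2, (φ (e.2, j)).2.2) = true
        ∧ ((φ (e.1, i)).2.1, (φ (e.2, j)).2.1) ∈ π ((φ (e.1, i)).1, (φ (e.2, j)).1)
      then (1 : ℝ) else 0)

theorem abs_sum_sub_sum_le_card_filter {α : Type*} {s : Finset α} {f g : α → ℝ}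
    (P : α → Prop) [DecidablePred P] (hle : ∀ a ∈ s, |f a - g a| ≤ 1)
    (heq : ∀ a ∈ s, ¬ P a → f a = g a) :
    |∑ a ∈ s, f a - ∑ a ∈ s, g a| ≤ #(s.filter P) := by
  rw [← sum_sub_distrib]
  calc |∑ a ∈ s, (f a - g a)| ≤ ∑ a ∈ s, |f a - g a| := abs_sum_le_sum_abs _ _
    _ ≤ ∑ a ∈ s, if P a then (1 : ℝ) else 0 := by
        refine sum_le_sum fun a ha => ?_
        split_ifs with hP
        · exact hle a ha
        · simp [heq a ha hP]
    _ = #(s.filter P) := by rw [sum_boole]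

section ReductionIndex

variable {V : Type*} {k N : ℕ} (φ : V × Fin N → V × Fin k × Fin N)

def imageIndex (p : (V × V) × Fin N × Fin N) : (V × V) × Fin N × Fin N :=
  (((φ (p.1.1, p.2.1)).1, (φ (p.1.2, p.2.2)).1), (φ (p.1.1, p.2.1)).2.2, (φ (p.1.2, p.2.2)).2.2)

def imageLabels (p : (V × V) × Fin N × Fin N) : Fin k × Fin k :=
  ((φ (p.1.1, p.2.1)).2.1, (φ (p.1.2, p.2.2)).2.1)

variable {φ}

theorem injective_imageIndex_imageLabels (hφ : Function.Injective φ) :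
    Function.Injective fun p => (imageIndex φ p, imageLabels φ p) := by
  rintro ⟨⟨u, v⟩, i, j⟩ ⟨⟨u', v'⟩, i', j'⟩ h
  simp only [imageIndex, imageLabels, Prod.mk.injEq] at h
  obtain ⟨⟨⟨hu, hv⟩, hi, hj⟩, hl, hl'⟩ := h
  obtain ⟨rfl, rfl⟩ := Prod.mk.inj (hφ (Prod.ext hu (Prod.ext hl hi)))
  obtain ⟨rfl, rfl⟩ := Prod.mk.inj (hφ (Prod.ext hv (Prod.ext hl' hj)))
  rfl

theorem card_filter_imageIndex_eq_le [DecidableEq V] (hφ : Function.Injective φ)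
    (s : Finset ((V × V) × Fin N × Fin N)) (c : (V × V) × Fin N × Fin N) :
    #(s.filter (imageIndex φ · = c)) ≤ k ^ 2 := by
  calc #(s.filter (imageIndex φ · = c)) ≤ #(univ : Finset (Fin k × Fin k)) := by
        refine card_le_card_of_injOn (imageLabels φ) (fun _ _ => mem_univ _) ?_
        intro a ha b hb hab
        exact injective_imageIndex_imageLabels hφ
          (Prod.ext ((mem_filter.mp ha).2.trans (mem_filter.mp hb).2.symm) hab)
    _ = k ^ 2 := by simp [sq]

end ReductionIndex

section ValueTerm

variable {V : Type*} [DecidableEq V] {k N : ℕ} (E : Finset (V × V))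
  (π : V × V → Finset (Fin k × Fin k)) (φ : V × Fin N → V × Fin k × Fin N)

noncomputable def valueTerm (Z : (V × V) × Fin N × Fin N → Bool)
    (p : (V × V) × Fin N × Fin N) : ℝ :=
  if Z p = true ∧ (imageIndex φ p).1 ∈ E ∧ Z (imageIndex φ p) = true
      ∧ imageLabels φ p ∈ π (imageIndex φ p).1
    then 1 else 0

theorem valueQAP_eq_sum_valueTerm [Fintype V] (Z : (V × V) × Fin N × Fin N → Bool) :
    valueQAP E π φ Z = ∑ p ∈ E ×ˢ (univ : Finset (Fin N × Fin N)), valueTerm E π φ Z p := by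
  rw [valueQAP, sum_product]
  refine sum_congr rfl fun e _ => ?_
  rw [Fintype.sum_prod_type]
  rfl

theorem abs_valueTerm_sub_le_one (Z Z' : (V × V) × Fin N × Fin N → Bool)
    (p : (V × V) × Fin N × Fin N) :
    |valueTerm E π φ Z p - valueTerm E π φ Z' p| ≤ 1 := by
  unfold valueTerm
  split_ifs <;> norm_num

theorem valueTerm_congr {Z Z' : (V × V) × Fin N × Fin N → Bool} {p : (V × V) × Fin N × Fin N}
    (hp : Z p = Z' p) (himage : Z (imageIndex φ p) = Z' (imageIndex φ p)) :
    valueTerm E π φ Z p = valueTerm E π φ Z' p := by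
  simp only [valueTerm, hp, himage]

end ValueTerm

/-- For any fixed injective map `φ`, the function `VALUE(φ)` of the Bernoulli
variables `X_{uivj}` is `(k² + 1)`-Lipschitz: flipping a single variable changes
the value by at most `k² + 1`. -/
theorem stmt18 {V : Type*} [Fintype V] [DecidableEq V] {k N : ℕ}
    (E : Finset (V × V)) (π : V × V → Finset (Fin k × Fin k))
    (φ : V × Fin N → V × Fin k × Fin N) (hφ : Function.Injective φ)
    (X Y : (V × V) × Fin N × Fin N → Bool)
    (c : (V × V) × Fin N × Fin N)
    (hflip : ∀ c' ≠ c, X c' = Y c') :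
    |valueQAP E π φ X - valueQAP E π φ Y| ≤ (k : ℝ) ^ 2 + 1 := by
  set T := E ×ˢ (univ : Finset (Fin N × Fin N))
  rw [valueQAP_eq_sum_valueTerm, valueQAP_eq_sum_valueTerm]
  calc _ ≤ (#(T.filter fun p => p = c ∨ imageIndex φ p = c) : ℝ) := by
        refine abs_sum_sub_sum_le_card_filter _
          (fun p _ => abs_valueTerm_sub_le_one E π φ X Y p) fun p _ hp => ?_
        push Not at hp
        exact valueTerm_congr E π φ (hflip _ hp.1) (hflip _ hp.2)
    _ ≤ #(T.filter (· = c)) + #(T.filter (imageIndex φ · = c)) := by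
        rw [filter_or]
        exact_mod_cast card_union_le _ _
    _ ≤ 1 + k ^ 2 := by
        gcongr
        · exact_mod_cast card_le_one.mpr fun a ha b hb => by
            rw [(mem_filter.mp ha).2, (mem_filter.mp hb).2]
        · exact_mod_cast card_filter_imageIndex_eq_le hφ T c
    _ = (k : ℝ) ^ 2 + 1 := add_comm _ _
end
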